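/- arXiv:2502.12108 — 3 statements merged into one kernel-verified Lean document; each statement's English description precedes it below -/
import Mathlib

section
/- Sufficiency direction of the Strong Completeness theorem: let f : ℝⁿ → ℝ be continuously differentiable and let γ : [0,1] → ℝⁿ be a continuously differentiable path with γ(0) = x̄ and γ(1) = x. Suppose there exists a continuous function λ : [0,1] → ℝ such that γ̇(t) = λ(t) ∇f(γ(t)) for every t ∈ [0,1], and λ does not change sign (λ(t) ≥ 0 for all t, or λ(t) ≤ 0 for all t). Then ∑_{i=1}^n |A_i^γ(x)| = |f(x) − f(x̄)|. -/
open Set MeasureTheory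

/-- The `i`-th partial derivative of `f : ℝⁿ → ℝ` at `z`. -/
noncomputable def partialD (n : ℕ) (f : (Fin n → ℝ) → ℝ) (z : Fin n → ℝ) (i : Fin n) : ℝ :=
  fderiv ℝ f z (Pi.single i 1)

/-- The gradient of `f : ℝⁿ → ℝ` at `z`, as the vector of partial derivatives. -/
noncomputable def gradVec (n : ℕ) (f : (Fin n → ℝ) → ℝ) (z : Fin n → ℝ) : Fin n → ℝ :=
  fun i => partialD n f z i

/-- The Euclidean norm of the gradient of `f` at `z`. -/
noncomputable def gradNorm (n : ℕ) (f : (Fin n → ℝ) → ℝ) (z : Fin n → ℝ) : ℝ :=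
  Real.sqrt (∑ i, gradVec n f z i ^ 2)

/-- The path attribution of coordinate `i`:
`A_i^γ = ∫₀¹ (∂f/∂x_i)(γ(t)) · γ̇_i(t) dt`. -/
noncomputable def pathAttr (n : ℕ) (f : (Fin n → ℝ) → ℝ) (γ : ℝ → Fin n → ℝ) (i : Fin n) : ℝ :=
  ∫ t in (0:ℝ)..1, partialD n f (γ t) i * deriv γ t i

/-!
By the chain rule the integrands of the attributions add up to `(f ∘ γ)'`, so the
attributions add up to `f x - f x̄` (completeness). Along a gradient-parallel path the `i`-th
integrand is `λ(t) (∂f/∂x_i)(γ(t))²`, which has the sign of `λ`; hence all attributions share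
one sign, and then the sum of their absolute values is the absolute value of their sum.
-/

theorem Finset.sum_abs_eq_abs_sum_of_sameSign {ι : Type*} {s : Finset ι} {a : ι → ℝ}
    (h : (∀ i ∈ s, 0 ≤ a i) ∨ (∀ i ∈ s, a i ≤ 0)) :
    ∑ i ∈ s, |a i| = |∑ i ∈ s, a i| := by
  rcases h with hnonneg | hnonpos
  · rw [Finset.abs_sum_of_nonneg hnonneg]
    exact Finset.sum_congr rfl fun i hi => abs_of_nonneg (hnonneg i hi)
  · have hneg : ∀ i ∈ s, 0 ≤ -a i := fun i hi => neg_nonneg.mpr (hnonpos i hi)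
    rw [← abs_neg, ← Finset.sum_neg_distrib, Finset.abs_sum_of_nonneg hneg]
    exact Finset.sum_congr rfl fun i hi => abs_of_nonpos (hnonpos i hi)

section PathAttribution

variable {n : ℕ} {f : (Fin n → ℝ) → ℝ} {γ : ℝ → Fin n → ℝ}

theorem fderiv_apply_eq_sum_partialD (z v : Fin n → ℝ) :
    fderiv ℝ f z v = ∑ i, partialD n f z i * v i := by
  conv_lhs => rw [pi_eq_sum_univ' v]
  simp only [map_sum, map_smul, smul_eq_mul, partialD, mul_comm]

theorem hasDerivAt_comp_eq_sum_partialD_mul {t : ℝ} (hf : DifferentiableAt ℝ f (γ t))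
    (hγ : DifferentiableAt ℝ γ t) :
    HasDerivAt (fun s => f (γ s)) (∑ i, partialD n f (γ t) i * deriv γ t i) t := by
  rw [← fderiv_apply_eq_sum_partialD]
  exact hf.hasFDerivAt.comp_hasDerivAt t hγ.hasDerivAt

theorem continuous_partialD_comp_mul_deriv (hf : ContDiff ℝ 1 f) (hγ : ContDiff ℝ 1 γ)
    (i : Fin n) : Continuous fun t => partialD n f (γ t) i * deriv γ t i :=
  (((hf.continuous_fderiv one_ne_zero).comp hγ.continuous).clm_apply continuous_const).mul
    ((continuous_apply i).comp (hγ.continuous_deriv le_rfl))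

theorem sum_pathAttr_eq_sub (hf : ContDiff ℝ 1 f) (hγ : ContDiff ℝ 1 γ) :
    ∑ i, pathAttr n f γ i = f (γ 1) - f (γ 0) := by
  have hcont := continuous_partialD_comp_mul_deriv hf hγ
  simp only [pathAttr]
  rw [← intervalIntegral.integral_finsetSum
    fun i _ => (hcont i).intervalIntegrable 0 1]
  exact intervalIntegral.integral_eq_sub_of_hasDerivAt
    (fun t _ => hasDerivAt_comp_eq_sum_partialD_mul
      (hf.differentiable one_ne_zero _) (hγ.differentiable one_ne_zero t))
    ((continuous_finsetSum _ fun i _ => hcont i).intervalIntegrable 0 1)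

theorem partialD_mul_deriv_eq_of_deriv_eq_smul_gradVec {t c : ℝ}
    (hpar : deriv γ t = c • gradVec n f (γ t)) (i : Fin n) :
    partialD n f (γ t) i * deriv γ t i = c * gradVec n f (γ t) i ^ 2 := by
  rw [hpar, Pi.smul_apply, smul_eq_mul, gradVec]
  ring

variable {lam : ℝ → ℝ}

theorem pathAttr_nonneg_of_gradient_parallel
    (hpar : ∀ t ∈ Icc (0:ℝ) 1, deriv γ t = lam t • gradVec n f (γ t))
    (hlam : ∀ t ∈ Icc (0:ℝ) 1, 0 ≤ lam t) (i : Fin n) : 0 ≤ pathAttr n f γ i :=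
  intervalIntegral.integral_nonneg zero_le_one fun t ht => by
    rw [partialD_mul_deriv_eq_of_deriv_eq_smul_gradVec (hpar t ht)]
    exact mul_nonneg (hlam t ht) (sq_nonneg _)

theorem pathAttr_nonpos_of_gradient_parallel
    (hpar : ∀ t ∈ Icc (0:ℝ) 1, deriv γ t = lam t • gradVec n f (γ t))
    (hlam : ∀ t ∈ Icc (0:ℝ) 1, lam t ≤ 0) (i : Fin n) : pathAttr n f γ i ≤ 0 := by
  rw [← neg_nonneg, pathAttr, ← intervalIntegral.integral_neg]
  refine intervalIntegral.integral_nonneg zero_le_one fun t ht => ?_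
  rw [partialD_mul_deriv_eq_of_deriv_eq_smul_gradVec (hpar t ht), neg_nonneg]
  exact mul_nonpos_of_nonpos_of_nonneg (hlam t ht) (sq_nonneg _)

end PathAttribution

theorem strong_completeness_sufficiency_general
    (n : ℕ) (f : (Fin n → ℝ) → ℝ) (γ : ℝ → Fin n → ℝ) (xbar x : Fin n → ℝ)
    (hf : ContDiff ℝ 1 f) (hγ : ContDiff ℝ 1 γ)
    (h0 : γ 0 = xbar) (h1 : γ 1 = x)
    (lam : ℝ → ℝ)
    (hpar : ∀ t ∈ Icc (0:ℝ) 1, deriv γ t = lam t • gradVec n f (γ t))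
    (hsign : (∀ t ∈ Icc (0:ℝ) 1, 0 ≤ lam t) ∨ (∀ t ∈ Icc (0:ℝ) 1, lam t ≤ 0)) :
    ∑ i, |pathAttr n f γ i| = |f x - f xbar| := by
  have hsameSign : (∀ i ∈ Finset.univ, 0 ≤ pathAttr n f γ i) ∨
      (∀ i ∈ Finset.univ, pathAttr n f γ i ≤ 0) :=
    hsign.imp (fun hlam i _ => pathAttr_nonneg_of_gradient_parallel hpar hlam i)
      (fun hlam i _ => pathAttr_nonpos_of_gradient_parallel hpar hlam i)
  rw [Finset.sum_abs_eq_abs_sum_of_sameSign hsameSign, sum_pathAttr_eq_sub hf hγ, h0, h1]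

/-- Sufficiency direction of the Strong Completeness theorem: a gradient-parallel path
with constant-sign speed factor satisfies Strong Completeness. -/
theorem strong_completeness_sufficiency
    (n : ℕ) (f : (Fin n → ℝ) → ℝ) (γ : ℝ → Fin n → ℝ) (xbar x : Fin n → ℝ)
    (hf : ContDiff ℝ 1 f) (hγ : ContDiff ℝ 1 γ)
    (h0 : γ 0 = xbar) (h1 : γ 1 = x)
    (lam : ℝ → ℝ) (hlam : ContinuousOn lam (Icc 0 1))
    (hpar : ∀ t ∈ Icc (0:ℝ) 1, deriv γ t = lam t • gradVec n f (γ t))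
    (hsign : (∀ t ∈ Icc (0:ℝ) 1, 0 ≤ lam t) ∨ (∀ t ∈ Icc (0:ℝ) 1, lam t ≤ 0)) :
    ∑ i, |pathAttr n f γ i| = |f x - f xbar| :=
  strong_completeness_sufficiency_general n f γ xbar x hf hγ h0 h1 lam hpar hsign
end

section
/- Attribution formula and nonnegativity along a gradient-parallel path: let f : ℝⁿ → ℝ be continuously differentiable and γ : [0,1] → ℝⁿ a continuously differentiable path with γ(0) = x̄, γ(1) = x, such that γ̇(t) = λ(t) ∇f(γ(t)) for all t ∈ [0,1] for some continuous λ : [0,1] → ℝ. Then for each coordinate i, A_i^γ(x) = ∫₀¹ λ(t) ((∂f/∂x_i)(γ(t)))² dt; in particular, if λ(t) ≥ 0 for all t then A_i^γ(x) ≥ 0 for every i. -/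
open Set MeasureTheory

/-- Attribution formula and nonnegativity along a gradient-parallel path. -/
theorem attribution_formula_gradient_parallel
    (n : ℕ) (f : (Fin n → ℝ) → ℝ) (γ : ℝ → Fin n → ℝ) (xbar x : Fin n → ℝ)
    (hf : ContDiff ℝ 1 f) (hγ : ContDiff ℝ 1 γ)
    (h0 : γ 0 = xbar) (h1 : γ 1 = x)
    (lam : ℝ → ℝ) (hlam : ContinuousOn lam (Icc 0 1))
    (hpar : ∀ t ∈ Icc (0:ℝ) 1, deriv γ t = lam t • gradVec n f (γ t)) :
    (∀ i, pathAttr n f γ i = ∫ t in (0:ℝ)..1, lam t * partialD n f (γ t) i ^ 2) ∧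
      ((∀ t ∈ Icc (0:ℝ) 1, 0 ≤ lam t) → ∀ i, 0 ≤ pathAttr n f γ i) := by
  have key : ∀ i, pathAttr n f γ i = ∫ t in (0:ℝ)..1, lam t * partialD n f (γ t) i ^ 2 := by
    intro i
    unfold pathAttr
    apply intervalIntegral.integral_congr
    intro t ht
    rw [uIcc_of_le (by norm_num : (0:ℝ) ≤ 1)] at ht
    have := hpar t ht
    simp only [this, Pi.smul_apply, smul_eq_mul, gradVec]
    ring
  refine ⟨key, fun hpos i => ?_⟩
  rw [key i]
  apply intervalIntegral.integral_nonneg (by norm_num)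
  intro t ht
  exact mul_nonneg (hpos t ht) (sq_nonneg _)
end

section
/- Symmetry preservation of path attributions: let f : ℝⁿ → ℝ be continuously differentiable and symmetric in coordinates i and j (f(σ(z)) = f(z) for all z, where σ swaps the i-th and j-th coordinates), and let γ : [0,1] → ℝⁿ be a continuously differentiable path with γ(0) = x̄, γ(1) = x, whose i-th and j-th components coincide: γ_i(t) = γ_j(t) for all t ∈ [0,1]. Then the attributions to coordinates i and j are equal: A_i^γ(x) = A_j^γ(x). -/
open Set MeasureTheory

/-! Both ingredients are invariant under the coordinate swap `σ`: `f ∘ σ = f`, and `σ ∘ γ = γ`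
near every `t ∈ (0, 1)`. The chain rule for the linear equivalence `σ`, which needs no
differentiability (both sides are the junk value `0` together), turns this into `∂ᵢf = ∂ⱼf` on
the diagonal `zᵢ = zⱼ` and `γ̇ᵢ = γ̇ⱼ` on `(0, 1)`, so the two integrands agree there. -/

open Filter Topology

namespace ContinuousLinearEquiv

variable (R : Type*) [Semiring R] (M : Type*) [AddCommMonoid M] [Module R M] [TopologicalSpace M]
  {m n : Type*}

def funCongrLeft (e : m ≃ n) : (n → M) ≃L[R] (m → M) where
  toLinearEquiv := LinearEquiv.funCongrLeft R M e
  continuous_toFun := continuous_pi fun _ => continuous_apply _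
  continuous_invFun := continuous_pi fun _ => continuous_apply _

variable {R M}

@[simp]
theorem funCongrLeft_apply (e : m ≃ n) (z : n → M) : funCongrLeft R M e z = z ∘ e :=
  rfl

theorem funCongrLeft_single [DecidableEq m] [DecidableEq n] (e : m ≃ n) (i : n) (a : M) :
    funCongrLeft R M e (Pi.single i a) = Pi.single (e.symm i) a := by
  simp [Pi.single, Function.update_comp_equiv]

end ContinuousLinearEquiv

open ContinuousLinearEquiv

variable {𝕜 : Type*} [NontriviallyNormedField 𝕜] {ι : Type*} [Fintype ι] [DecidableEq ι]
  {E : Type*} [NormedAddCommGroup E] [NormedSpace 𝕜 E]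
  {F : Type*} [NormedAddCommGroup F] [NormedSpace 𝕜 F]

theorem fderiv_single_eq_of_comp_swap_eq {f : (ι → E) → F} {i j : ι}
    (hf : ∀ z, f (z ∘ Equiv.swap i j) = f z) {z : ι → E} (hz : z i = z j) (a : E) :
    fderiv 𝕜 f z (Pi.single i a) = fderiv 𝕜 f z (Pi.single j a) := by
  let σ := funCongrLeft 𝕜 E (Equiv.swap i j)
  have hzσ : σ z = z := funext (Equiv.apply_swap_eq_self hz)
  have hchain := σ.comp_right_fderiv (f := f) (x := z)
  rw [show f ∘ σ = f from funext hf, hzσ] at hchain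
  conv_lhs => rw [hchain]
  rw [ContinuousLinearMap.comp_apply, coe_coe, funCongrLeft_single, Equiv.symm_swap,
    Equiv.swap_apply_left]

theorem deriv_apply_eq_of_eventually_apply_eq {γ : 𝕜 → ι → E} {i j : ι} {t : 𝕜}
    (h : ∀ᶠ s in 𝓝 t, γ s i = γ s j) : deriv γ t i = deriv γ t j := by
  let σ := funCongrLeft 𝕜 E (Equiv.swap i j)
  have hγσ : σ ∘ γ =ᶠ[𝓝 t] γ := h.mono fun s hs => funext (Equiv.apply_swap_eq_self hs)
  have hchain : deriv (σ ∘ γ) t = σ (deriv γ t) := by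
    unfold deriv
    rw [σ.comp_fderiv]
    rfl
  rw [hγσ.deriv_eq] at hchain
  simpa [σ] using congrFun hchain i

theorem path_attributions_symmetry_preserving_general
    (n : ℕ) (f : (Fin n → ℝ) → ℝ) (γ : ℝ → Fin n → ℝ)
    (i j : Fin n)
    (hsym : ∀ z : Fin n → ℝ, f (z ∘ Equiv.swap i j) = f z)
    (hcomp : ∀ t ∈ Icc (0:ℝ) 1, γ t i = γ t j) :
    pathAttr n f γ i = pathAttr n f γ j := by
  refine intervalIntegral.integral_congr_Ioo_of_le zero_le_one fun t ht => ?_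
  have hnear : ∀ᶠ s in 𝓝 t, γ s i = γ s j :=
    eventually_of_mem (Ioo_mem_nhds ht.1 ht.2) fun s hs => hcomp s (Ioo_subset_Icc_self hs)
  simp only [partialD, fderiv_single_eq_of_comp_swap_eq hsym hnear.self_of_nhds,
    deriv_apply_eq_of_eventually_apply_eq hnear]

/-- Symmetry preservation of path attributions: if `f` is symmetric in coordinates `i`
and `j`, and the `i`-th and `j`-th components of the path coincide on `[0,1]`, then the
attributions to coordinates `i` and `j` are equal. -/
theorem path_attributions_symmetry_preserving
    (n : ℕ) (f : (Fin n → ℝ) → ℝ) (γ : ℝ → Fin n → ℝ) (xbar x : Fin n → ℝ)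
    (i j : Fin n) (hij : i ≠ j)
    (hf : ContDiff ℝ 1 f) (hγ : ContDiff ℝ 1 γ)
    (h0 : γ 0 = xbar) (h1 : γ 1 = x)
    (hsym : ∀ z : Fin n → ℝ, f (z ∘ Equiv.swap i j) = f z)
    (hcomp : ∀ t ∈ Icc (0:ℝ) 1, γ t i = γ t j) :
    pathAttr n f γ i = pathAttr n f γ j :=
  path_attributions_symmetry_preserving_general n f γ i j hsym hcomp
end
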